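/- arXiv:2209.09655 — 2 statements merged into one kernel-verified Lean document; each statement's English description precedes it below -/
import Mathlib

section
/- Let H be an RKHS with kernel k on a compact set X, with S the ball of radius R in H, and let S_t^∥, S_t^⊥ be as in the orthogonal decomposition at sample points x₁,…,x_t. Then for any ε^∥ > 0 and ε^⊥ > 0, the packing number of S_t^⊥ restricted to X at scale ε^⊥ in the sup-norm is at least N(S(X), ε^∥ + ε^⊥, ‖·‖_∞) / N(S_t^∥(X), ε^∥, ‖·‖_∞), where N denotes covering number in the sup-norm over X. -/
open scoped RealInnerProductSpace ENNReal

/-- Sup-norm covering number over `X` of a family `F` of real-valued functions: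
minimal cardinality of a finite set `C` such that every `f ∈ F` is within `ε` of some
`c ∈ C` uniformly on `X`. -/
noncomputable def covN {D : Type*} (X : Set D) (F : Set (D → ℝ)) (ε : ℝ) : ℝ≥0∞ :=
  ⨅ (C : Finset (D → ℝ)) (_ : ∀ f ∈ F, ∃ c ∈ C, ∀ x ∈ X, |f x - c x| ≤ ε),
    (C.card : ℝ≥0∞)

/-- Sup-norm packing number over `X` of a family `F` of real-valued functions:
maximal cardinality of a finite subset of `F` whose members are pairwise more than `ε`
apart in sup-norm over `X`. -/
noncomputable def packN {D : Type*} (X : Set D) (F : Set (D → ℝ)) (ε : ℝ) : ℝ≥0∞ :=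
  ⨆ (P : Finset (D → ℝ))
    (_ : ↑P ⊆ F ∧ ∀ p ∈ P, ∀ q ∈ P, p ≠ q → ∃ x ∈ X, ε < |p x - q x|),
    (P.card : ℝ≥0∞)

open scoped Pointwise

/-! Split every `f ∈ S` as `f = m + g` with `m` the orthogonal projection of `f` onto
`V = span {k(xᵢ, ·)}` and `g ∈ Vᗮ`; both pieces stay in the ball, and `g` vanishes at the `xᵢ`.
Adding an `ε^∥`-cover of `S_t^∥(X)` to an `ε^⊥`-cover of `S_t^⊥(X)` therefore gives an
`(ε^∥ + ε^⊥)`-cover of `S(X)`, and a maximal `ε^⊥`-packing of `S_t^⊥(X)` is an `ε^⊥`-cover.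
Hence `N(S(X), ε^∥ + ε^⊥) ≤ N(S_t^∥(X), ε^∥) · M(S_t^⊥(X), ε^⊥)`. -/

section SupNorm

variable {D : Type*} {X : Set D} {F G G' : Set (D → ℝ)} {ε ε' : ℝ}

def IsSupCover (X : Set D) (F : Set (D → ℝ)) (ε : ℝ) (C : Finset (D → ℝ)) : Prop :=
  ∀ f ∈ F, ∃ c ∈ C, ∀ x ∈ X, |f x - c x| ≤ ε

def IsSupPacking (X : Set D) (F : Set (D → ℝ)) (ε : ℝ) (P : Finset (D → ℝ)) : Prop :=
  ↑P ⊆ F ∧ ∀ p ∈ P, ∀ q ∈ P, p ≠ q → ∃ x ∈ X, ε < |p x - q x|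

theorem covN_le_card {C : Finset (D → ℝ)} (hC : IsSupCover X F ε C) :
    covN X F ε ≤ C.card :=
  iInf₂_le C hC

theorem card_le_packN {P : Finset (D → ℝ)} (hP : IsSupPacking X F ε P) :
    (P.card : ℝ≥0∞) ≤ packN X F ε :=
  le_iSup₂ (f := fun P (_ : IsSupPacking X F ε P) => (P.card : ℝ≥0∞)) P hP

theorem covN_eq_iInf :
    covN X F ε = ⨅ C : {C // IsSupCover X F ε C}, (C.1.card : ℝ≥0∞) :=
  iInf_subtype'

theorem exists_isSupCover_of_covN_ne_top (h : covN X F ε ≠ ⊤) :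
    ∃ C, IsSupCover X F ε C := by
  by_contra! hC
  exact h (iInf₂_eq_top.mpr fun C hC' => absurd hC' (hC C))

open Classical in
theorem IsSupCover.add {C C' : Finset (D → ℝ)} (hC : IsSupCover X G ε C)
    (hC' : IsSupCover X G' ε' C') (hF : F ⊆ G + G') :
    IsSupCover X F (ε + ε') (C + C') := by
  intro f hf
  obtain ⟨g, hg, g', hg', rfl⟩ := Set.mem_add.mp (hF hf)
  obtain ⟨c, hc, hgc⟩ := hC g hg
  obtain ⟨c', hc', hgc'⟩ := hC' g' hg'
  refine ⟨c + c', Finset.add_mem_add hc hc', fun x hx => ?_⟩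
  calc |(g + g') x - (c + c') x| = |(g x - c x) + (g' x - c' x)| := by
        simp only [Pi.add_apply]; ring_nf
    _ ≤ |g x - c x| + |g' x - c' x| := abs_add_le _ _
    _ ≤ ε + ε' := add_le_add (hgc x hx) (hgc' x hx)

theorem covN_le_mul_of_subset_add (hF : F ⊆ G + G') (hG : ∃ C, IsSupCover X G ε C)
    (hG' : ∃ C, IsSupCover X G' ε' C) :
    covN X F (ε + ε') ≤ covN X G ε * covN X G' ε' := by
  classical
  obtain ⟨C₀, hC₀⟩ := hG
  obtain ⟨C₀', hC₀'⟩ := hG'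
  rw [covN_eq_iInf (F := G), covN_eq_iInf (F := G')]
  refine ENNReal.le_iInf_mul_iInf ⟨⟨C₀, hC₀⟩, ENNReal.natCast_ne_top _⟩
    ⟨⟨C₀', hC₀'⟩, ENNReal.natCast_ne_top _⟩ fun C C' => ?_
  calc covN X F (ε + ε') ≤ ((C.1 + C'.1).card : ℝ≥0∞) := covN_le_card (C.2.add C'.2 hF)
    _ ≤ (C.1.card * C'.1.card : ℕ) := by exact_mod_cast Finset.card_add_le
    _ = _ := Nat.cast_mul _ _

open Classical in
theorem IsSupPacking.insert {P : Finset (D → ℝ)} {g : D → ℝ} (hP : IsSupPacking X F ε P)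
    (hg : g ∈ F) (hfar : ∀ p ∈ P, ∃ x ∈ X, ε < |g x - p x|) :
    IsSupPacking X F ε (insert g P) := by
  refine ⟨by simpa [Set.insert_subset_iff] using ⟨hg, hP.1⟩, fun p hp q hq hpq => ?_⟩
  rcases Finset.mem_insert.mp hp with rfl | hpP <;> rcases Finset.mem_insert.mp hq with rfl | hqP
  · exact absurd rfl hpq
  · exact hfar q hqP
  · simpa only [abs_sub_comm] using hfar p hpP
  · exact hP.2 p hpP q hqP hpq

theorem IsSupPacking.isSupCover_of_maximal (hε : 0 ≤ ε) {P : Finset (D → ℝ)}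
    (hP : IsSupPacking X F ε P) (hmax : ∀ Q, IsSupPacking X F ε Q → Q.card ≤ P.card) :
    IsSupCover X F ε P := by
  classical
  intro g hg
  by_contra! hfar
  have hgP : g ∉ P := fun hgP => by
    obtain ⟨x, -, hx⟩ := hfar g hgP
    simp only [sub_self, abs_zero] at hx
    linarith
  have := hmax _ (hP.insert hg hfar)
  rw [Finset.card_insert_of_notMem hgP] at this
  omega

theorem exists_maximal_isSupPacking (h : packN X F ε ≠ ⊤) :
    ∃ P, IsSupPacking X F ε P ∧ ∀ Q, IsSupPacking X F ε Q → Q.card ≤ P.card := by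
  have hne : {n | ∃ P, IsSupPacking X F ε P ∧ P.card = n}.Nonempty :=
    ⟨0, ∅, ⟨by simp, by simp⟩, rfl⟩
  obtain ⟨N, hN⟩ := ENNReal.exists_nat_gt h
  have hbdd : BddAbove {n | ∃ P, IsSupPacking X F ε P ∧ P.card = n} := ⟨N, by
    rintro _ ⟨P, hP, rfl⟩
    exact_mod_cast ((card_le_packN hP).trans_lt hN).le⟩
  obtain ⟨P, hP, hcard⟩ := Nat.sSup_mem hne hbdd
  exact ⟨P, hP, fun Q hQ => hcard ▸ le_csSup hbdd ⟨Q, hQ, rfl⟩⟩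

theorem covN_le_packN (hε : 0 ≤ ε) : covN X F ε ≤ packN X F ε := by
  rcases eq_or_ne (packN X F ε) ⊤ with h | h
  · exact h ▸ le_top
  obtain ⟨P, hP, hmax⟩ := exists_maximal_isSupPacking h
  exact (covN_le_card (hP.isSupCover_of_maximal hε hmax)).trans (card_le_packN hP)

end SupNorm

section Hilbert

variable {H : Type*} [NormedAddCommGroup H] [InnerProductSpace ℝ H]

theorem Submodule.normBall_subset_inter_add_inter_orthogonal (V : Submodule ℝ H)
    [V.HasOrthogonalProjection] (R : ℝ) :
    {f : H | ‖f‖ ≤ R} ⊆ ({f | ‖f‖ ≤ R} ∩ V) + ({f | ‖f‖ ≤ R} ∩ Vᗮ) := fun f hf =>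
  Set.mem_add.mpr ⟨V.starProjection f,
    ⟨(V.norm_starProjection_apply_le f).trans hf, V.starProjection_apply_mem f⟩,
    Vᗮ.starProjection f,
    ⟨(Vᗮ.norm_starProjection_apply_le f).trans hf, Vᗮ.starProjection_apply_mem f⟩,
    V.starProjection_add_starProjection_orthogonal f⟩

theorem orthogonal_span_range_subset {ι : Type*} (k : ι → H) :
    ((Submodule.span ℝ (Set.range k))ᗮ : Set H) ⊆ {f | ∀ i, ⟪f, k i⟫ = 0} :=
  fun _ hf i =>
    Submodule.inner_left_of_mem_orthogonal (Submodule.subset_span (Set.mem_range_self i)) hf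

def innerEval {D : Type*} (K : D → H) : H →ₗ[ℝ] D → ℝ where
  toFun f p := ⟪f, K p⟫
  map_add' f g := funext fun p => inner_add_left f g (K p)
  map_smul' c f := funext fun p => real_inner_smul_left f (K p) c

end Hilbert

theorem packing_perp_ge_covering_ratio_general {H : Type*} [NormedAddCommGroup H]
    [InnerProductSpace ℝ H] {d t : ℕ}
    (K : (Fin d → ℝ) → H) (X : Set (Fin d → ℝ))
    (x : Fin t → (Fin d → ℝ)) (R : ℝ)
    (εpar εperp : ℝ) (hperp : 0 < εperp) :
    covN X ((fun f : H => fun p => ⟪f, K p⟫) '' {f : H | ‖f‖ ≤ R}) (εpar + εperp) /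
        covN X ((fun f : H => fun p => ⟪f, K p⟫) ''
          ({f : H | ‖f‖ ≤ R} ∩
            (Submodule.span ℝ (Set.range fun i => K (x i)) : Set H))) εpar ≤
      packN X ((fun f : H => fun p => ⟪f, K p⟫) ''
        ({f : H | ‖f‖ ≤ R} ∩ {f : H | ∀ i, ⟪f, K (x i)⟫ = 0})) εperp := by
  set V := Submodule.span ℝ (Set.range fun i => K (x i))
  have : FiniteDimensional ℝ V := FiniteDimensional.span_of_finite ℝ (Set.finite_range _)
  set ball : Set H := {f | ‖f‖ ≤ R}
  set Z : Set H := {f | ∀ i, ⟪f, K (x i)⟫ = 0}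
  change covN X (innerEval K '' ball) _ / covN X (innerEval K '' (ball ∩ V)) _ ≤
    packN X (innerEval K '' (ball ∩ Z)) _
  have hsplit : innerEval K '' ball ⊆ innerEval K '' (ball ∩ V) + innerEval K '' (ball ∩ Z) := by
    rw [← Set.image_add]
    refine Set.image_mono ((V.normBall_subset_inter_add_inter_orthogonal R).trans ?_)
    exact Set.add_subset_add_left (Set.inter_subset_inter_right _
      (orthogonal_span_range_subset fun i => K (x i)))
  rcases eq_or_ne (covN X (innerEval K '' (ball ∩ V)) εpar) ⊤ with hparTop | hparTop
  · simp [hparTop]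
  rcases eq_or_ne (packN X (innerEval K '' (ball ∩ Z)) εperp) ⊤ with hperpTop | hperpTop
  · simp [hperpTop]
  have hcovPerp := covN_le_packN (X := X) (F := innerEval K '' (ball ∩ Z)) hperp.le
  refine ENNReal.div_le_of_le_mul ?_
  calc covN X (innerEval K '' ball) (εpar + εperp)
      ≤ covN X (innerEval K '' (ball ∩ V)) εpar * covN X (innerEval K '' (ball ∩ Z)) εperp :=
        covN_le_mul_of_subset_add hsplit (exists_isSupCover_of_covN_ne_top hparTop)
          (exists_isSupCover_of_covN_ne_top (hcovPerp.trans_lt hperpTop.lt_top).ne)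
    _ ≤ packN X (innerEval K '' (ball ∩ Z)) εperp * covN X (innerEval K '' (ball ∩ V)) εpar := by
        rw [mul_comm]; gcongr

/-- Decomposition of covering numbers: with `S` the RKHS ball of radius `R`,
`S_t^∥ = S ∩ span{K (x i)}`, `S_t^⊥ = S ∩ {f | f(x i) = 0 ∀ i}`, and `Q(X)` the set of
restrictions (here: evaluation functions `p ↦ ⟪f, K p⟫`), for any `ε^∥, ε^⊥ > 0`,
`M(S_t^⊥(X), ε^⊥) ≥ N(S(X), ε^∥ + ε^⊥) / N(S_t^∥(X), ε^∥)`. -/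
theorem packing_perp_ge_covering_ratio {H : Type*} [NormedAddCommGroup H]
    [InnerProductSpace ℝ H] [CompleteSpace H] {d t : ℕ}
    (K : (Fin d → ℝ) → H) (X : Set (Fin d → ℝ)) (hX : IsCompact X)
    (x : Fin t → (Fin d → ℝ)) (R : ℝ) (hR : 0 < R)
    (εpar εperp : ℝ) (hpar : 0 < εpar) (hperp : 0 < εperp) :
    covN X ((fun f : H => fun p => ⟪f, K p⟫) '' {f : H | ‖f‖ ≤ R}) (εpar + εperp) /
        covN X ((fun f : H => fun p => ⟪f, K p⟫) ''
          ({f : H | ‖f‖ ≤ R} ∩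
            (Submodule.span ℝ (Set.range fun i => K (x i)) : Set H))) εpar ≤
      packN X ((fun f : H => fun p => ⟪f, K p⟫) ''
        ({f : H | ‖f‖ ≤ R} ∩ {f : H | ∀ i, ⟪f, K (x i)⟫ = 0})) εperp :=
  packing_perp_ge_covering_ratio_general K X x R εpar εperp hperp
end

section
/- Suppose the RKHS ball S over a compact set X satisfies: for the zero-sequence x₁⁰,…,x_t⁰ of a deterministic algorithm with t ≤ log N(S(X), 4ε, ‖·‖_∞)/(4 log(R/ε)) and ε < ε₀, the set S_t^⊥ of functions in S vanishing at all x_i⁰ has sup-norm packing number ≥ 2 at scale 3ε. Then there exists f̂ ∈ S with f̂(x_i⁰) = 0 for all i ∈ [t] and inf_{x∈X} f̂(x) ≤ −3ε/2, so the algorithm run on f̂ incurs simple regret at least 3ε/2 after t evaluations. -/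
open scoped RealInnerProductSpace

/-- History of a deterministic algorithm fed with zero observations. -/
def zeroHist {D : Type*} (alg : List (D × ℝ) → D) : ℕ → List (D × ℝ)
  | 0 => []
  | n + 1 => zeroHist alg n ++ [(alg (zeroHist alg n), 0)]

/-- The zero sequence of a deterministic algorithm: the points it queries when every
observation it receives is `0`. -/
def zeroSeq {D : Type*} (alg : List (D × ℝ) → D) (n : ℕ) : D :=
  alg (zeroHist alg n)

/-- Adversarial function construction: the RKHS `H` is modeled as a real Hilbert space
with kernel sections `K`, evaluation `f(x) = ⟪f, K x⟫`, and ball `S` of radius `R`.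
If the set `S_t^⊥` of members of `S` vanishing on the zero sequence `x₁⁰,…,x_t⁰` of a
deterministic algorithm contains two functions at sup-norm distance `≥ 3ε` over `X`
(packing number ≥ 2 at scale `3ε`), then there is `f̂ ∈ S` vanishing at all `xᵢ⁰` with
`inf_X f̂ ≤ -3ε/2`; hence the algorithm run on `f̂` incurs simple regret at least `3ε/2`
after `t` evaluations. -/
theorem adversarial_function_exists {H : Type*} [NormedAddCommGroup H]
    [InnerProductSpace ℝ H] [CompleteSpace H] {d : ℕ}
    (K : (Fin d → ℝ) → H) (X : Set (Fin d → ℝ)) (hX : IsCompact X)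
    (R : ℝ) (hR : 0 < R) (ε : ℝ) (hε : 0 < ε) (t : ℕ)
    (alg : List ((Fin d → ℝ) × ℝ) → (Fin d → ℝ))
    (hpack : ∃ f₁ f₂ : H,
      (‖f₁‖ ≤ R ∧ ∀ i < t, ⟪f₁, K (zeroSeq alg i)⟫ = 0) ∧
      (‖f₂‖ ≤ R ∧ ∀ i < t, ⟪f₂, K (zeroSeq alg i)⟫ = 0) ∧
      ∃ x ∈ X, 3 * ε ≤ |⟪f₁, K x⟫ - ⟪f₂, K x⟫|) :
    ∃ fhat : H, ‖fhat‖ ≤ R ∧ (∀ i < t, ⟪fhat, K (zeroSeq alg i)⟫ = 0) ∧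
      ∃ x ∈ X, ⟪fhat, K x⟫ ≤ -(3 * ε / 2) ∧
        ∀ i < t, 3 * ε / 2 ≤ ⟪fhat, K (zeroSeq alg i)⟫ - ⟪fhat, K x⟫ := by
  obtain ⟨f₁, f₂, ⟨h1n, h1z⟩, ⟨h2n, h2z⟩, x, hxX, hx⟩ := hpack
  set g : H := (2:ℝ)⁻¹ • (f₁ - f₂) with hg
  have hgn : ‖g‖ ≤ R := by
    rw [hg, norm_smul]
    have : ‖f₁ - f₂‖ ≤ 2 * R := by
      calc ‖f₁ - f₂‖ ≤ ‖f₁‖ + ‖f₂‖ := norm_sub_le _ _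
        _ ≤ 2 * R := by linarith
    simp only [norm_inv, Real.norm_ofNat]
    linarith [this]
  have hgz : ∀ i < t, ⟪g, K (zeroSeq alg i)⟫ = 0 := by
    intro i hi
    rw [hg, real_inner_smul_left, inner_sub_left, h1z i hi, h2z i hi]
    ring
  have hgx : 3 * ε / 2 ≤ |⟪g, K x⟫| := by
    rw [hg, real_inner_smul_left, inner_sub_left, abs_mul]
    rw [abs_inv]
    have := hx
    rw [show |(2:ℝ)| = 2 by norm_num]
    linarith [abs_nonneg (⟪f₁, K x⟫ - ⟪f₂, K x⟫)]
  rcases le_or_gt (⟪g, K x⟫) 0 with hle | hlt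
  · refine ⟨g, hgn, hgz, x, hxX, ?_, ?_⟩
    · rw [abs_of_nonpos hle] at hgx; linarith
    · intro i hi; rw [hgz i hi]; rw [abs_of_nonpos hle] at hgx; linarith
  · refine ⟨-g, by simpa using hgn, ?_, x, hxX, ?_, ?_⟩
    · intro i hi; rw [inner_neg_left, hgz i hi, neg_zero]
    · rw [inner_neg_left]; rw [abs_of_pos hlt] at hgx; linarith
    · intro i hi; rw [inner_neg_left, inner_neg_left, hgz i hi]
      rw [abs_of_pos hlt] at hgx; linarith
end
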